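/- Let 𝒰 be a unitary system, ψ and η complete wandering vectors for 𝒰, and V the unique unitary in C_ψ(𝒰) with Vψ = η. If V² = I, then for all 0 ≤ α ≤ 2π the vector cos α · ψ + i sin α · η is a complete wandering vector for 𝒰. -/

import Mathlib

/-!
Since `V` is unitary with `V² = 1`, it is self-adjoint, so `T = cos α • 1 + (i sin α) • V`
satisfies `T* T = T T* = cos² α • 1 + sin² α • V² = 1`. Thus `T` is a unitary in the local
commutant `C_ψ(𝒰)` with `T ψ = cos α • ψ + i sin α • η`, and a unitary `T` with `T U ψ = U T ψ`
for all `U ∈ 𝒰` maps the orthonormal basis `{U ψ}` onto `{U (T ψ)}`.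
-/

variable {H : Type*} [NormedAddCommGroup H] [InnerProductSpace ℂ H] [CompleteSpace H]

/-- `ψ` is a complete wandering vector for `𝒰`. -/
def IsCompleteWandering (𝒰 : Set (H →L[ℂ] H)) (ψ : H) : Prop :=
  Orthonormal ℂ (fun U : 𝒰 => (U : H →L[ℂ] H) ψ) ∧
    (Submodule.span ℂ ((fun U : H →L[ℂ] H => U ψ) '' 𝒰)).topologicalClosure = ⊤

section LocalCommutant

variable {𝕜 E : Type*} [NormedField 𝕜] [SeminormedAddCommGroup E] [NormedSpace 𝕜 E]

def localCommutant (𝒰 : Set (E →L[𝕜] E)) (ψ : E) : Submodule 𝕜 (E →L[𝕜] E) where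
  carrier := {A | ∀ U ∈ 𝒰, (A * U - U * A) ψ = 0}
  add_mem' {A B} hA hB U hU := by
    simpa [add_mul, mul_add, add_sub_add_comm] using congr($(hA U hU) + $(hB U hU))
  zero_mem' := by simp
  smul_mem' c A hA U hU := by
    simpa [mul_smul_comm, ← smul_sub] using congr(c • $(hA U hU))

theorem mem_localCommutant_iff {𝒰 : Set (E →L[𝕜] E)} {ψ : E} {A : E →L[𝕜] E} :
    A ∈ localCommutant 𝒰 ψ ↔ ∀ U ∈ 𝒰, A (U ψ) = U (A ψ) := by
  simp [localCommutant, sub_eq_zero]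

theorem one_mem_localCommutant (𝒰 : Set (E →L[𝕜] E)) (ψ : E) : 1 ∈ localCommutant 𝒰 ψ :=
  mem_localCommutant_iff.2 fun _ _ => rfl

end LocalCommutant

theorem star_eq_self_of_mem_unitary_of_mul_self_eq_one {A : Type*} [Monoid A] [StarMul A]
    {V : A} (hV : V ∈ unitary A) (hV2 : V * V = 1) : star V = V :=
  calc star V = star V * (V * V) := by rw [hV2, mul_one]
    _ = V := by rw [← mul_assoc, Unitary.star_mul_self_of_mem hV, one_mul]

theorem smul_one_add_I_smul_mem_unitary {A : Type*} [Ring A] [StarRing A] [Algebra ℂ A]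
    [StarModule ℂ A] {V : A} (hV : V ∈ unitary A) (hV2 : V * V = 1)
    {a b : ℝ} (hab : a ^ 2 + b ^ 2 = 1) :
    (a : ℂ) • (1 : A) + (Complex.I * b) • V ∈ unitary A := by
  have hab' : (a : ℂ) ^ 2 - (Complex.I * b) ^ 2 = 1 := by
    rw [mul_pow, Complex.I_sq, neg_one_mul, sub_neg_eq_add]
    exact_mod_cast hab
  have hstar : star ((a : ℂ) • (1 : A) + (Complex.I * b) • V)
      = (a : ℂ) • (1 : A) - (Complex.I * b) • V := by
    simp [star_eq_self_of_mem_unitary_of_mul_self_eq_one hV hV2, sub_eq_add_neg]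
  rw [Unitary.mem_iff, hstar]
  constructor <;>
  · simp only [add_mul, mul_add, sub_mul, mul_sub, smul_mul_smul_comm, one_mul, mul_one, hV2]
    linear_combination (norm := module) hab' • (1 : A)

theorem IsCompleteWandering.apply_of_mem_unitary {𝒰 : Set (H →L[ℂ] H)} {ψ : H}
    (hψ : IsCompleteWandering 𝒰 ψ) {T : H →L[ℂ] H} (hT : T ∈ unitary (H →L[ℂ] H))
    (hTψ : T ∈ localCommutant 𝒰 ψ) : IsCompleteWandering 𝒰 (T ψ) := by
  have hcomm : ∀ U ∈ 𝒰, U (T ψ) = T (U ψ) := fun U hU =>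
    (mem_localCommutant_iff.1 hTψ U hU).symm
  obtain ⟨hortho, hdense⟩ := hψ
  constructor
  · convert hortho.comp_linearIsometryEquiv (Unitary.linearIsometryEquiv ⟨T, hT⟩) using 1
    ext U
    exact hcomm U U.2
  · set S := (fun U : H →L[ℂ] H => U ψ) '' 𝒰
    have himage : (fun U : H →L[ℂ] H => U (T ψ)) '' 𝒰 = T '' S := by
      rw [Set.image_image]
      exact Set.image_congr hcomm
    have hspan : (Submodule.span ℂ (T '' S) : Set H) = T '' Submodule.span ℂ S :=
      congrArg SetLike.coe (Submodule.span_image (T : H →ₗ[ℂ] H))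
    have hsurj : Function.Surjective T := fun x =>
      ⟨star T x, congr($(Unitary.mul_star_self_of_mem hT) x)⟩
    rw [← Submodule.dense_iff_topologicalClosure_eq_top] at hdense ⊢
    rw [himage, hspan]
    exact hsurj.denseRange.dense_image T.continuous hdense

theorem stmt_7_general (𝒰 : Set (H →L[ℂ] H))
    (ψ η : H) (hψ : IsCompleteWandering 𝒰 ψ)
    (V : H →L[ℂ] H) (hV : V ∈ unitary (H →L[ℂ] H))
    (hVloc : ∀ U ∈ 𝒰, (V * U - U * V) ψ = 0) (hVψ : V ψ = η)
    (hV2 : V * V = 1) :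
    ∀ α : ℝ, 0 ≤ α → α ≤ 2 * Real.pi →
      IsCompleteWandering 𝒰
        ((Real.cos α : ℂ) • ψ + (Complex.I * (Real.sin α : ℂ)) • η) := by
  intro α _ _
  have hunitary := smul_one_add_I_smul_mem_unitary hV hV2 (Real.cos_sq_add_sin_sq α)
  have hlocal : (Real.cos α : ℂ) • (1 : H →L[ℂ] H) + (Complex.I * Real.sin α) • V
      ∈ localCommutant 𝒰 ψ :=
    add_mem (Submodule.smul_mem _ _ (one_mem_localCommutant 𝒰 ψ))
      (Submodule.smul_mem _ _ hVloc)
  simpa [hVψ] using hψ.apply_of_mem_unitary hunitary hlocal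

/-- Let `ψ, η` be complete wandering vectors for a unitary system `𝒰`, and `V` the unitary in
the local commutant `C_ψ(𝒰)` with `Vψ = η`.  If `V² = I`, then for all `0 ≤ α ≤ 2π` the vector
`cos α · ψ + i sin α · η` is a complete wandering vector for `𝒰`. -/
theorem stmt_7 (𝒰 : Set (H →L[ℂ] H)) (h1 : (1 : H →L[ℂ] H) ∈ 𝒰)
    (hunit : ∀ W ∈ 𝒰, W ∈ unitary (H →L[ℂ] H))
    (ψ η : H) (hψ : IsCompleteWandering 𝒰 ψ) (hη : IsCompleteWandering 𝒰 η)
    (V : H →L[ℂ] H) (hV : V ∈ unitary (H →L[ℂ] H))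
    (hVloc : ∀ U ∈ 𝒰, (V * U - U * V) ψ = 0) (hVψ : V ψ = η)
    (hV2 : V * V = 1) :
    ∀ α : ℝ, 0 ≤ α → α ≤ 2 * Real.pi →
      IsCompleteWandering 𝒰
        ((Real.cos α : ℂ) • ψ + (Complex.I * (Real.sin α : ℂ)) • η) :=
  stmt_7_general 𝒰 ψ η hψ V hV hVloc hVψ hV2
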